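/- arXiv:1109.6207 — 2 statements merged into one kernel-verified Lean document; each statement's English description precedes it below -/
import Mathlib

section
/- Let a < b be real numbers, let L : ℝ × ℝ × ℝ × ℝ → ℝ be a smooth function, let α : ℝ → ℝ be smooth, and let β : ℝ → ℝ be smooth with compact support contained in the open interval (a,b). Then (d/dh)|_{h=0} ∫_a^b L(t, α(t)+hβ(t), α'(t)+hβ'(t), α''(t)+hβ''(t)) dt = ∫_a^b [∂₂L(t,α(t),α'(t),α''(t)) − (d/dt)(∂₃L(t,α(t),α'(t),α''(t))) + (d²/dt²)(∂₄L(t,α(t),α'(t),α''(t)))] · β(t) dt. -/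
open Real MeasureTheory

/-- Partial derivative of `L : ℝ × ℝ × ℝ × ℝ → ℝ` with respect to its second argument. -/
noncomputable def d2 (L : ℝ × ℝ × ℝ × ℝ → ℝ) (x : ℝ × ℝ × ℝ × ℝ) : ℝ :=
  fderiv ℝ L x (0, 1, 0, 0)

/-- Partial derivative of `L : ℝ × ℝ × ℝ × ℝ → ℝ` with respect to its third argument. -/
noncomputable def d3 (L : ℝ × ℝ × ℝ × ℝ → ℝ) (x : ℝ × ℝ × ℝ × ℝ) : ℝ :=
  fderiv ℝ L x (0, 0, 1, 0)

/-- Partial derivative of `L : ℝ × ℝ × ℝ × ℝ → ℝ` with respect to its fourth argument. -/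
noncomputable def d4 (L : ℝ × ℝ × ℝ × ℝ → ℝ) (x : ℝ × ℝ × ℝ × ℝ) : ℝ :=
  fderiv ℝ L x (0, 0, 0, 1)

/-- The first variation formula (2.17) for a second-order Lagrangian:
`(d/dh)|₀ ∫_a^b L(t, α+hβ, α'+hβ', α''+hβ'') dt
  = ∫_a^b [∂₂L − (d/dt)∂₃L + (d²/dt²)∂₄L] β dt`. -/
theorem first_variation_second_order (a b : ℝ) (hab : a < b)
    (L : ℝ × ℝ × ℝ × ℝ → ℝ) (hL : ContDiff ℝ (⊤ : ℕ∞) L)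
    (α : ℝ → ℝ) (hα : ContDiff ℝ (⊤ : ℕ∞) α)
    (β : ℝ → ℝ) (hβ : ContDiff ℝ (⊤ : ℕ∞) β) (hβc : HasCompactSupport β)
    (hβs : tsupport β ⊆ Set.Ioo a b) :
    deriv (fun h : ℝ => ∫ t in a..b,
        L (t, α t + h * β t, deriv α t + h * deriv β t,
            deriv (deriv α) t + h * deriv (deriv β) t)) 0
      = ∫ t in a..b,
          (d2 L (t, α t, deriv α t, deriv (deriv α) t)
            - deriv (fun s => d3 L (s, α s, deriv α s, deriv (deriv α) s)) t
            + deriv (deriv (fun s => d4 L (s, α s, deriv α s, deriv (deriv α) s))) t)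
            * β t := by
  -- downgrade analytic (⊤ = ω) hypotheses to C^∞
  have hL : ContDiff ℝ (⊤:ℕ∞) L := hL.of_le (by simp)
  have hα : ContDiff ℝ (⊤:ℕ∞) α := hα.of_le (by simp)
  have hβ : ContDiff ℝ (⊤:ℕ∞) β := hβ.of_le (by simp)
  -- smoothness of derivatives
  obtain ⟨hαd, hα1⟩ := contDiff_infty_iff_deriv.mp hα
  obtain ⟨hα1d, hα2⟩ := contDiff_infty_iff_deriv.mp hα1
  obtain ⟨hβd, hβ1⟩ := contDiff_infty_iff_deriv.mp hβ
  obtain ⟨hβ1d, hβ2⟩ := contDiff_infty_iff_deriv.mp hβ1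
  set γ : ℝ → ℝ × ℝ × ℝ × ℝ := fun t => (t, α t, deriv α t, deriv (deriv α) t) with hγdef
  have hγ : ContDiff ℝ (⊤:ℕ∞) γ := contDiff_id.prodMk (hα.prodMk (hα1.prodMk hα2))
  have hfd : ContDiff ℝ (⊤:ℕ∞) (fderiv ℝ L) := hL.fderiv_right (le_refl _)
  have hd2 : ContDiff ℝ (⊤:ℕ∞) (d2 L) := hfd.clm_apply contDiff_const
  have hd3 : ContDiff ℝ (⊤:ℕ∞) (d3 L) := hfd.clm_apply contDiff_const
  have hd4 : ContDiff ℝ (⊤:ℕ∞) (d4 L) := hfd.clm_apply contDiff_const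
  set g2 : ℝ → ℝ := fun s => d2 L (s, α s, deriv α s, deriv (deriv α) s) with hg2def
  set g3 : ℝ → ℝ := fun s => d3 L (s, α s, deriv α s, deriv (deriv α) s) with hg3def
  set g4 : ℝ → ℝ := fun s => d4 L (s, α s, deriv α s, deriv (deriv α) s) with hg4def
  have hg2 : ContDiff ℝ (⊤:ℕ∞) g2 := hd2.comp hγ
  have hg3 : ContDiff ℝ (⊤:ℕ∞) g3 := hd3.comp hγ
  have hg4 : ContDiff ℝ (⊤:ℕ∞) g4 := hd4.comp hγ
  obtain ⟨hg3d, hg3'⟩ := contDiff_infty_iff_deriv.mp hg3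
  obtain ⟨hg4d, hg4'⟩ := contDiff_infty_iff_deriv.mp hg4
  obtain ⟨hg4'd, hg4''⟩ := contDiff_infty_iff_deriv.mp hg4'
  -- boundary values vanish
  have hts1 : tsupport (deriv β) ⊆ tsupport β :=
    closure_minimal support_deriv_subset (isClosed_tsupport β)
  have hβa : β a = 0 :=
    image_eq_zero_of_notMem_tsupport (fun h => lt_irrefl a (hβs h).1)
  have hβb : β b = 0 :=
    image_eq_zero_of_notMem_tsupport (fun h => lt_irrefl b (hβs h).2)
  have hβ1a : deriv β a = 0 :=
    image_eq_zero_of_notMem_tsupport (fun h => lt_irrefl a (hβs (hts1 h)).1)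
  have hβ1b : deriv β b = 0 :=
    image_eq_zero_of_notMem_tsupport (fun h => lt_irrefl b (hβs (hts1 h)).2)
  -- the integrand family and its h-derivative
  set p : ℝ → ℝ → ℝ × ℝ × ℝ × ℝ := fun h t =>
      (t, α t + h * β t, deriv α t + h * deriv β t,
        deriv (deriv α) t + h * deriv (deriv β) t) with hpdef
  set F : ℝ → ℝ → ℝ := fun h t => L (p h t) with hFdef
  set F' : ℝ → ℝ → ℝ := fun h t =>
      fderiv ℝ L (p h t) (0, β t, deriv β t, deriv (deriv β) t) with hF'def
  have hderiv : ∀ h t, HasDerivAt (fun h => F h t) (F' h t) h := by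
    intro h t
    have hp : HasDerivAt (fun h : ℝ => p h t)
        ((0 : ℝ), β t, deriv β t, deriv (deriv β) t) h := by
      exact (hasDerivAt_const h t).prodMk
        (((hasDerivAt_mul_const (β t)).const_add (α t)).prodMk
          (((hasDerivAt_mul_const (deriv β t)).const_add (deriv α t)).prodMk
            ((hasDerivAt_mul_const (deriv (deriv β) t)).const_add (deriv (deriv α) t))))
    exact ((hL.differentiable (by simp) (p h t)).hasFDerivAt.comp_hasDerivAt h hp)
  -- continuity in both variables
  have hpc : Continuous (fun q : ℝ × ℝ => p q.1 q.2) := by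
    apply continuous_snd.prodMk
    apply Continuous.prodMk
    · exact (hα.continuous.comp continuous_snd).add
        (continuous_fst.mul (hβ.continuous.comp continuous_snd))
    apply Continuous.prodMk
    · exact (hα1.continuous.comp continuous_snd).add
        (continuous_fst.mul (hβ1.continuous.comp continuous_snd))
    · exact (hα2.continuous.comp continuous_snd).add
        (continuous_fst.mul (hβ2.continuous.comp continuous_snd))
  have hF'c : Continuous (fun q : ℝ × ℝ => F' q.1 q.2) := by
    apply (hfd.continuous.comp hpc).clm_apply
    exact continuous_const.prodMk ((hβ.continuous.comp continuous_snd).prodMk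
      ((hβ1.continuous.comp continuous_snd).prodMk (hβ2.continuous.comp continuous_snd)))
  -- uniform bound on a compact set
  obtain ⟨C, hC⟩ := (IsCompact.exists_bound_of_continuousOn
    ((isCompact_Icc (a := (-1:ℝ)) (b := 1)).prod isCompact_uIcc) hF'c.continuousOn)
  -- differentiation under the integral sign
  have main : IntervalIntegrable (F' 0) volume a b ∧
      HasDerivAt (fun h => ∫ t in a..b, F h t) (∫ t in a..b, F' 0 t) 0 := by
    apply intervalIntegral.hasDerivAt_integral_of_dominated_loc_of_deriv_le
      (bound := fun _ => C) (F' := F') (Metric.ball_mem_nhds 0 one_pos)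
    · filter_upwards with h
      exact ((hL.continuous.comp (hpc.comp (Continuous.prodMk_right h))).aestronglyMeasurable)
    · exact ((hL.continuous.comp (hpc.comp (Continuous.prodMk_right 0))).intervalIntegrable a b)
    · exact (hF'c.comp (Continuous.prodMk_right 0)).aestronglyMeasurable
    · filter_upwards with t ht h hh
      refine hC (h, t) ⟨?_, Set.uIoc_subset_uIcc ht⟩
      have : |h| < 1 := by simpa [Metric.mem_ball, Real.dist_eq] using hh
      exact Set.mem_Icc.2 ⟨by linarith [abs_lt.mp this], le_of_lt (abs_lt.mp this).2⟩
    · exact intervalIntegrable_const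
    · filter_upwards with t ht h _
      exact hderiv h t
  have hmain := main.2.deriv
  rw [show (fun h : ℝ => ∫ t in a..b,
        L (t, α t + h * β t, deriv α t + h * deriv β t,
            deriv (deriv α) t + h * deriv (deriv β) t)) = fun h => ∫ t in a..b, F h t from rfl,
    hmain]
  -- rewrite F' 0 t
  have hF'0 : ∀ t, F' 0 t = β t * g2 t + deriv β t * g3 t + deriv (deriv β) t * g4 t := by
    intro t
    have hpt : p 0 t = γ t := by simp [hpdef, hγdef]
    have hv : ((0:ℝ), β t, deriv β t, deriv (deriv β) t)
        = β t • ((0:ℝ), (1:ℝ), (0:ℝ), (0:ℝ)) + deriv β t • (0, 0, 1, 0)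
          + deriv (deriv β) t • (0, 0, 0, 1) := by
      simp [Prod.ext_iff]
    simp only [hF'def, hpt, hv, map_add, _root_.map_smul, smul_eq_mul]
    simp [hg2def, hg3def, hg4def, d2, d3, d4, hγdef]
  -- integrability of the pieces
  have h1 : IntervalIntegrable (fun t => β t * g2 t) volume a b :=
    ((hβ.continuous.mul hg2.continuous)).intervalIntegrable a b
  have h2 : IntervalIntegrable (fun t => deriv β t * g3 t) volume a b :=
    ((hβ1.continuous.mul hg3.continuous)).intervalIntegrable a b
  have h3 : IntervalIntegrable (fun t => deriv (deriv β) t * g4 t) volume a b :=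
    ((hβ2.continuous.mul hg4.continuous)).intervalIntegrable a b
  have hsplit : (∫ t in a..b, F' 0 t)
      = (∫ t in a..b, β t * g2 t) + (∫ t in a..b, deriv β t * g3 t)
        + (∫ t in a..b, deriv (deriv β) t * g4 t) := by
    rw [← intervalIntegral.integral_add h1 h2, ← intervalIntegral.integral_add (h1.add h2) h3]
    exact intervalIntegral.integral_congr (fun t _ => hF'0 t)
  -- integration by parts : first order term
  have ibp3 : (∫ t in a..b, deriv β t * g3 t) = -∫ t in a..b, deriv g3 t * β t := by
    have := intervalIntegral.integral_mul_deriv_eq_deriv_mul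
      (u := g3) (v := β) (u' := deriv g3) (v' := deriv β)
      (fun x _ => (hg3d x).hasDerivAt) (fun x _ => (hβd x).hasDerivAt)
      (hg3'.continuous.intervalIntegrable a b) (hβ1.continuous.intervalIntegrable a b)
    rw [intervalIntegral.integral_congr (fun t _ => mul_comm (deriv β t) (g3 t)), this,
      hβa, hβb]
    ring
  -- integration by parts twice : second order term
  have ibp4a : (∫ t in a..b, deriv (deriv β) t * g4 t)
      = -∫ t in a..b, deriv g4 t * deriv β t := by
    have := intervalIntegral.integral_mul_deriv_eq_deriv_mul
      (u := g4) (v := deriv β) (u' := deriv g4) (v' := deriv (deriv β))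
      (fun x _ => (hg4d x).hasDerivAt) (fun x _ => (hβ1d x).hasDerivAt)
      (hg4'.continuous.intervalIntegrable a b) (hβ2.continuous.intervalIntegrable a b)
    rw [intervalIntegral.integral_congr (fun t _ => mul_comm (deriv (deriv β) t) (g4 t)), this,
      hβ1a, hβ1b]
    ring
  have ibp4b : (∫ t in a..b, deriv g4 t * deriv β t)
      = -∫ t in a..b, deriv (deriv g4) t * β t := by
    have := intervalIntegral.integral_mul_deriv_eq_deriv_mul
      (u := deriv g4) (v := β) (u' := deriv (deriv g4)) (v' := deriv β)
      (fun x _ => (hg4'd x).hasDerivAt) (fun x _ => (hβd x).hasDerivAt)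
      (hg4''.continuous.intervalIntegrable a b) (hβ1.continuous.intervalIntegrable a b)
    rw [this, hβa, hβb]
    ring
  -- combine
  have hrhs : (∫ t in a..b, (g2 t - deriv g3 t + deriv (deriv g4) t) * β t)
      = (∫ t in a..b, β t * g2 t) - (∫ t in a..b, deriv g3 t * β t)
        + (∫ t in a..b, deriv (deriv g4) t * β t) := by
    have j1 : IntervalIntegrable (fun t => β t * g2 t) volume a b := h1
    have j2 : IntervalIntegrable (fun t => deriv g3 t * β t) volume a b :=
      (hg3'.continuous.mul hβ.continuous).intervalIntegrable a b
    have j3 : IntervalIntegrable (fun t => deriv (deriv g4) t * β t) volume a b :=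
      (hg4''.continuous.mul hβ.continuous).intervalIntegrable a b
    rw [← intervalIntegral.integral_sub j1 j2, ← intervalIntegral.integral_add (j1.sub j2) j3]
    exact intervalIntegral.integral_congr (fun t _ => by ring)
  rw [hsplit, ibp3, ibp4a, ibp4b, hrhs]
  ring
end

section
/- Let k be an integer and let α : ℝ → ℝ be smooth. Then α satisfies the Euler–Lagrange equation ∂₂L − (d/dt)∂₃L + (d²/dt²)∂₄L = 0 along α for the Lagrangian L(t,y,p,q) = (q − k² sin y cos y)² if and only if α satisfies the fourth order ODE α⁗(t) − 2k² cos(2α(t)) α''(t) + 2k² sin(2α(t)) (α'(t))² + (k⁴/2) sin(2α(t)) cos(2α(t)) = 0 for all t. -/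
open Real MeasureTheory
open scoped ContDiff

/-- The reduced bienergy density (3.6) for equivariant maps `φ_α : T² → S²` of
degree `k`: `L(t, y, p, q) = (q − k² sin y cos y)²`. -/
noncomputable def torusLagrangian (k : ℤ) : ℝ × ℝ × ℝ × ℝ → ℝ :=
  fun x => (x.2.2.2 - (k : ℝ) ^ 2 * Real.sin x.2.1 * Real.cos x.2.1) ^ 2

noncomputable def yP : ℝ × ℝ × ℝ × ℝ →L[ℝ] ℝ :=
  (ContinuousLinearMap.fst ℝ ℝ (ℝ × ℝ)).comp (ContinuousLinearMap.snd ℝ ℝ (ℝ × ℝ × ℝ))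

noncomputable def qP : ℝ × ℝ × ℝ × ℝ →L[ℝ] ℝ :=
  ((ContinuousLinearMap.snd ℝ ℝ ℝ).comp (ContinuousLinearMap.snd ℝ ℝ (ℝ × ℝ))).comp
    (ContinuousLinearMap.snd ℝ ℝ (ℝ × ℝ × ℝ))

lemma hasFDerivAt_L (k : ℤ) (x : ℝ × ℝ × ℝ × ℝ) :
    HasFDerivAt (torusLagrangian k)
      ((2 * (x.2.2.2 - (k : ℝ) ^ 2 * Real.sin x.2.1 * Real.cos x.2.1) ^ 1) •
        (qP - (((k : ℝ) ^ 2 * Real.sin x.2.1) • ((-Real.sin x.2.1) • yP) +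
          Real.cos x.2.1 • ((k : ℝ) ^ 2 • (Real.cos x.2.1 • yP))))) x := by
  have hy : HasFDerivAt (fun x : ℝ × ℝ × ℝ × ℝ => x.2.1) yP x := yP.hasFDerivAt
  have hq : HasFDerivAt (fun x : ℝ × ℝ × ℝ × ℝ => x.2.2.2) qP x := qP.hasFDerivAt
  have hsin : HasFDerivAt (fun x : ℝ × ℝ × ℝ × ℝ => Real.sin x.2.1)
      (Real.cos x.2.1 • yP) x := by
      have := (Real.hasDerivAt_sin x.2.1).comp_hasFDerivAt x hy; exact this
  have hcos : HasFDerivAt (fun x : ℝ × ℝ × ℝ × ℝ => Real.cos x.2.1)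
      ((-Real.sin x.2.1) • yP) x := by
      have := (Real.hasDerivAt_cos x.2.1).comp_hasFDerivAt x hy; exact this
  exact (hasDerivAt_pow 2 _).comp_hasFDerivAt x ((hq.sub (((hsin.const_mul ((k:ℝ)^2)).mul hcos))))

lemma d2_eq (k : ℤ) (x : ℝ × ℝ × ℝ × ℝ) :
    d2 (torusLagrangian k) x =
      2 * (x.2.2.2 - (k : ℝ) ^ 2 * Real.sin x.2.1 * Real.cos x.2.1) *
        ((k : ℝ) ^ 2 * (Real.sin x.2.1 ^ 2 - Real.cos x.2.1 ^ 2)) := by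
  rw [d2, (hasFDerivAt_L k x).fderiv]
  simp only [yP, qP, ContinuousLinearMap.smul_apply, ContinuousLinearMap.sub_apply,
    ContinuousLinearMap.add_apply, ContinuousLinearMap.coe_comp', Function.comp_apply,
    ContinuousLinearMap.coe_fst', ContinuousLinearMap.coe_snd', smul_eq_mul]
  ring

lemma d3_eq (k : ℤ) (x : ℝ × ℝ × ℝ × ℝ) : d3 (torusLagrangian k) x = 0 := by
  rw [d3, (hasFDerivAt_L k x).fderiv]
  simp only [yP, qP, ContinuousLinearMap.smul_apply, ContinuousLinearMap.sub_apply,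
    ContinuousLinearMap.add_apply, ContinuousLinearMap.coe_comp', Function.comp_apply,
    ContinuousLinearMap.coe_fst', ContinuousLinearMap.coe_snd', smul_eq_mul]
  ring

lemma d4_eq (k : ℤ) (x : ℝ × ℝ × ℝ × ℝ) :
    d4 (torusLagrangian k) x =
      2 * (x.2.2.2 - (k : ℝ) ^ 2 * Real.sin x.2.1 * Real.cos x.2.1) := by
  rw [d4, (hasFDerivAt_L k x).fderiv]
  simp only [yP, qP, ContinuousLinearMap.smul_apply, ContinuousLinearMap.sub_apply,
    ContinuousLinearMap.add_apply, ContinuousLinearMap.coe_comp', Function.comp_apply,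
    ContinuousLinearMap.coe_fst', ContinuousLinearMap.coe_snd', smul_eq_mul]
  ring

/-- A smooth `α` satisfies the Euler–Lagrange equation of the reduced bienergy (3.6)
iff it satisfies the biharmonicity equation (3.7). -/
theorem euler_lagrange_iff_biharmonic_ode_torus (k : ℤ) (α : ℝ → ℝ)
    (hα : ContDiff ℝ (⊤ : ℕ∞) α) :
    (∀ t : ℝ,
        d2 (torusLagrangian k) (t, α t, deriv α t, deriv (deriv α) t)
          - deriv (fun s =>
              d3 (torusLagrangian k) (s, α s, deriv α s, deriv (deriv α) s)) t
          + deriv (deriv (fun s =>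
              d4 (torusLagrangian k) (s, α s, deriv α s, deriv (deriv α) s))) t = 0)
    ↔ ∀ t : ℝ,
        iteratedDeriv 4 α t
          - 2 * (k : ℝ) ^ 2 * Real.cos (2 * α t) * deriv (deriv α) t
          + 2 * (k : ℝ) ^ 2 * Real.sin (2 * α t) * (deriv α t) ^ 2
          + (k : ℝ) ^ 4 / 2 * Real.sin (2 * α t) * Real.cos (2 * α t) = 0 := by
  set c : ℝ := (k : ℝ) ^ 2 with hc
  have hα' : ContDiff ℝ ∞ α := hα.of_le (by simp)
  have h1 : ContDiff ℝ ∞ (deriv α) := (contDiff_infty_iff_deriv.mp hα').2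
  have h2 : ContDiff ℝ ∞ (deriv (deriv α)) := (contDiff_infty_iff_deriv.mp h1).2
  have h3 : ContDiff ℝ ∞ (deriv (deriv (deriv α))) := (contDiff_infty_iff_deriv.mp h2).2
  have hA : ∀ t, HasDerivAt α (deriv α t) t :=
    fun t => ((hα'.differentiable (by simp)) t).hasDerivAt
  have hA1 : ∀ t, HasDerivAt (deriv α) (deriv (deriv α) t) t :=
    fun t => ((h1.differentiable (by simp)) t).hasDerivAt
  have hA2 : ∀ t, HasDerivAt (deriv (deriv α)) (deriv (deriv (deriv α)) t) t :=
    fun t => ((h2.differentiable (by simp)) t).hasDerivAt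
  have hA3 : ∀ t, HasDerivAt (deriv (deriv (deriv α))) (deriv (deriv (deriv (deriv α))) t) t :=
    fun t => ((h3.differentiable (by simp)) t).hasDerivAt
  have hsin : ∀ t, HasDerivAt (fun s => Real.sin (α s)) (Real.cos (α t) * deriv α t) t :=
    fun t => (Real.hasDerivAt_sin (α t)).comp t (hA t)
  have hcos : ∀ t, HasDerivAt (fun s => Real.cos (α s)) (-Real.sin (α t) * deriv α t) t :=
    fun t => (Real.hasDerivAt_cos (α t)).comp t (hA t)
  -- first derivative of the d4 term
  set E1 : ℝ → ℝ := fun t => 2 * deriv (deriv (deriv α)) t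
      - 2 * c * (Real.cos (α t) ^ 2 - Real.sin (α t) ^ 2) * deriv α t with hE1def
  have hH : ∀ t, HasDerivAt
      (fun s => 2 * (deriv (deriv α) s - c * Real.sin (α s) * Real.cos (α s))) (E1 t) t := by
    intro t
    have := (((hA2 t).sub (((hsin t).const_mul c).mul (hcos t)))).const_mul 2
    refine this.congr_deriv ?_
    rw [hE1def]; ring
  -- second derivative of the d4 term
  set E2 : ℝ → ℝ := fun t => 2 * deriv (deriv (deriv (deriv α))) t
      - 2 * c * (Real.cos (α t) ^ 2 - Real.sin (α t) ^ 2) * deriv (deriv α) t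
      + 8 * c * Real.sin (α t) * Real.cos (α t) * (deriv α t) ^ 2 with hE2def
  have hE1 : ∀ t, HasDerivAt E1 (E2 t) t := by
    intro t
    have hc2 : HasDerivAt (fun s => Real.cos (α s) ^ 2)
        ((2 * Real.cos (α t) ^ 1) * (-Real.sin (α t) * deriv α t)) t := (hcos t).pow 2
    have hs2 : HasDerivAt (fun s => Real.sin (α s) ^ 2)
        ((2 * Real.sin (α t) ^ 1) * (Real.cos (α t) * deriv α t)) t := (hsin t).pow 2
    have := ((hA3 t).const_mul 2).sub
      ((((hc2.sub hs2).const_mul (2 * c)).mul (hA1 t)))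
    refine this.congr_deriv ?_
    rw [hE2def, Pi.sub_apply]; ring
  have key : ∀ t : ℝ,
      d2 (torusLagrangian k) (t, α t, deriv α t, deriv (deriv α) t)
        - deriv (fun s =>
            d3 (torusLagrangian k) (s, α s, deriv α s, deriv (deriv α) s)) t
        + deriv (deriv (fun s =>
            d4 (torusLagrangian k) (s, α s, deriv α s, deriv (deriv α) s))) t
      = 2 * (iteratedDeriv 4 α t
          - 2 * c * Real.cos (2 * α t) * deriv (deriv α) t
          + 2 * c * Real.sin (2 * α t) * (deriv α t) ^ 2
          + c ^ 2 / 2 * Real.sin (2 * α t) * Real.cos (2 * α t)) := by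
    intro t
    have e3 : (fun s => d3 (torusLagrangian k) (s, α s, deriv α s, deriv (deriv α) s))
        = fun _ => (0 : ℝ) := funext fun s => d3_eq k _
    have e4 : (fun s => d4 (torusLagrangian k) (s, α s, deriv α s, deriv (deriv α) s))
        = fun s => 2 * (deriv (deriv α) s - c * Real.sin (α s) * Real.cos (α s)) :=
      funext fun s => d4_eq k _
    have e4' : deriv (fun s => 2 * (deriv (deriv α) s - c * Real.sin (α s) * Real.cos (α s)))
        = E1 := funext fun t => (hH t).deriv
    have eit : iteratedDeriv 4 α t = deriv (deriv (deriv (deriv α))) t := by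
      simp [iteratedDeriv_succ, iteratedDeriv_zero]
    rw [e3, e4, e4', deriv_const, (hE1 t).deriv, d2_eq, eit, hE2def]
    simp only
    rw [Real.sin_two_mul, Real.cos_two_mul]
    have hpy := Real.sin_sq_add_cos_sq (α t)
    linear_combination (4 * c * deriv (deriv α) t - 2 * c ^ 2 * Real.sin (α t) * Real.cos (α t)) * hpy
  constructor
  · intro h t
    have h1 := h t
    have h2 := key t
    rw [h1] at h2
    have : c ^ 2 = (k : ℝ) ^ 4 := by rw [hc]; ring
    rw [this] at h2
    linarith
  · intro h t
    rw [key t]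
    have h1 := h t
    have : c ^ 2 = (k : ℝ) ^ 4 := by rw [hc]; ring
    rw [this]
    linarith
end
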